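/- If G is a regular graph and H₁, H₂ are L-cospectral graphs (same Laplacian spectrum), then the subdivision-vertex joins G∨̇H₁ and G∨̇H₂ are L-cospectral. -/

import Mathlib

open Matrix BigOperators Finset

attribute [local instance] Classical.propDecidable

/-- The coronal of a matrix `M`: `1ᵀ (xI − M)⁻¹ 1`. -/
noncomputable def coronal {n : Type*} [Fintype n] [DecidableEq n]
    (M : Matrix n n ℝ) (x : ℝ) : ℝ :=
  (fun _ => (1 : ℝ)) ⬝ᵥ ((x • (1 : Matrix n n ℝ) - M)⁻¹ *ᵥ fun _ => (1 : ℝ))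

/-- The adjacency matrix over ℝ (classical decidability). -/
noncomputable def adjM {V : Type*} (G : SimpleGraph V) : Matrix V V ℝ :=
  letI := Classical.decRel G.Adj
  G.adjMatrix ℝ

/-- The Laplacian matrix over ℝ. -/
noncomputable def lapM {V : Type*} [Fintype V] (G : SimpleGraph V) : Matrix V V ℝ :=
  letI := Classical.decRel G.Adj
  letI : DecidableEq V := Classical.decEq V
  G.lapMatrix ℝ

/-- The signless Laplacian matrix over ℝ. -/
noncomputable def signlessLapM {V : Type*} [Fintype V] (G : SimpleGraph V) : Matrix V V ℝ :=
  letI := Classical.decRel G.Adj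
  letI : DecidableEq V := Classical.decEq V
  G.degMatrix ℝ + G.adjMatrix ℝ

noncomputable instance edgeSetFintype {V : Type*} [Finite V] (G : SimpleGraph V) :
    Fintype G.edgeSet := Fintype.ofFinite _

/-- Subdivision-vertex join. -/
def svJoin {V₁ V₂ : Type*} (G₁ : SimpleGraph V₁) (G₂ : SimpleGraph V₂) :
    SimpleGraph (V₁ ⊕ (G₁.edgeSet ⊕ V₂)) where
  Adj a b :=
    match a, b with
    | Sum.inl v, Sum.inr (Sum.inl e) => v ∈ (e : Sym2 V₁)
    | Sum.inr (Sum.inl e), Sum.inl v => v ∈ (e : Sym2 V₁)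
    | Sum.inl _, Sum.inr (Sum.inr _) => True
    | Sum.inr (Sum.inr _), Sum.inl _ => True
    | Sum.inr (Sum.inr w), Sum.inr (Sum.inr w') => G₂.Adj w w'
    | _, _ => False
  symm := by
    refine ⟨?_⟩
    rintro (v | e | w) (v' | e' | w') h <;> simp_all <;> exact h.symm
  loopless := by
    refine ⟨?_⟩
    rintro (v | e | w) h <;> simp_all

/-- Subdivision-edge join. -/
def seJoin {V₁ V₂ : Type*} (G₁ : SimpleGraph V₁) (G₂ : SimpleGraph V₂) :
    SimpleGraph (V₁ ⊕ (G₁.edgeSet ⊕ V₂)) where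
  Adj a b :=
    match a, b with
    | Sum.inl v, Sum.inr (Sum.inl e) => v ∈ (e : Sym2 V₁)
    | Sum.inr (Sum.inl e), Sum.inl v => v ∈ (e : Sym2 V₁)
    | Sum.inr (Sum.inl _), Sum.inr (Sum.inr _) => True
    | Sum.inr (Sum.inr _), Sum.inr (Sum.inl _) => True
    | Sum.inr (Sum.inr w), Sum.inr (Sum.inr w') => G₂.Adj w w'
    | _, _ => False
  symm := by
    refine ⟨?_⟩
    rintro (v | e | w) (v' | e' | w') h <;> simp_all <;> exact h.symm
  loopless := by
    refine ⟨?_⟩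
    rintro (v | e | w) h <;> simp_all

/-- Number of spanning trees of a graph. -/
noncomputable def spanningTreeCount {V : Type*} (G : SimpleGraph V) : ℕ :=
  Nat.card {H : G.Subgraph // H.IsSpanning ∧ H.coe.IsTree}

/-! The Laplacians of `H₁` and `H₂` are symmetric, have the same spectrum and both kill the
all-ones vector `𝟙`, so some orthogonal `Q` satisfies `Q L(H₁) = L(H₂) Q` and `Q 𝟙 = 𝟙`: diagonalise
both, then correct by a Householder reflection inside `ker L(H₂)`. In `G ∨̇ H` every vertex outside
`H` is adjacent to all or to none of the vertices of `H`, so the blocks of the Laplacian linking `H`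
to the rest are constant along `H`, and conjugation by `diag(1, Q)` turns `L(G ∨̇ H₁)` into
`L(G ∨̇ H₂)`. -/

namespace Matrix

variable {m : Type*} [Fintype m] [DecidableEq m]

theorem IsHermitian.exists_unitary_conj_eq {𝕜 : Type*} [RCLike 𝕜] {A B : Matrix m m 𝕜}
    (hA : A.IsHermitian) (hB : B.IsHermitian) (h : A.charpoly = B.charpoly) :
    ∃ U ∈ unitaryGroup m 𝕜, U * A * star U = B := by
  have hdiagA := hA.conjStarAlgAut_star_eigenvectorUnitary
  rw [(hA.eigenvalues_eq_eigenvalues_iff hB).mpr h, Unitary.conjStarAlgAut_apply, Unitary.coe_star,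
    star_star] at hdiagA
  have hB' := hB.spectral_theorem
  rw [Unitary.conjStarAlgAut_apply] at hB'
  refine ⟨_, (hB.eigenvectorUnitary * star hA.eigenvectorUnitary).2, ?_⟩
  conv_rhs => rw [hB']
  rw [Submonoid.coe_mul, Unitary.coe_star, star_mul, star_star, ← hdiagA]
  simp only [Matrix.mul_assoc]

theorem exists_orthogonal_commute_mulVec_eq {B : Matrix m m ℝ} (hB : B.IsHermitian)
    {x y : m → ℝ} (hx : B *ᵥ x = 0) (hy : B *ᵥ y = 0) (hxy : x ⬝ᵥ x = y ⬝ᵥ y) :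
    ∃ R ∈ orthogonalGroup m ℝ, R * B = B * R ∧ R *ᵥ x = y := by
  by_cases hxy' : x = y
  · exact ⟨1, one_mem _, by simp, by simp [hxy']⟩
  set d := x - y
  have hd : d ⬝ᵥ d ≠ 0 := by rwa [Ne, dotProduct_self_eq_zero, sub_eq_zero]
  have hBd : B *ᵥ d = 0 := by simp [d, mulVec_sub, hx, hy]
  have hdB : d ᵥ* B = 0 := by
    rw [← mulVec_transpose, ← conjTranspose_eq_transpose_of_trivial, hB, hBd]
  have hdx : 2 * (d ⬝ᵥ x) = d ⬝ᵥ d := by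
    simp only [d, sub_dotProduct, dotProduct_sub, hxy, dotProduct_comm y x]; ring
  set c := 2 / (d ⬝ᵥ d)
  set R := 1 - c • vecMulVec d d
  have hRt : Rᵀ = R := by simp [R, transpose_vecMulVec]
  have hRB : R * B = B := by simp [R, sub_mul, vecMulVec_mul, hdB]
  have hBR : B * R = B := by simp [R, mul_sub, mul_vecMulVec, hBd]
  refine ⟨R, ?_, hRB.trans hBR.symm, ?_⟩
  · have hN : vecMulVec d d * vecMulVec d d = (d ⬝ᵥ d) • vecMulVec d d := by
      rw [vecMulVec_mul_vecMulVec, vecMulVec_smul]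
    have hc : c + c - c * c * (d ⬝ᵥ d) = 0 := by simp only [c]; field_simp; ring
    have hRR : R * R = 1 - (c + c - c * c * (d ⬝ᵥ d)) • vecMulVec d d := by
      simp only [R, sub_mul, mul_sub, one_mul, mul_one, smul_mul_smul_comm, hN, smul_smul]
      module
    rw [mem_orthogonalGroup_iff, hRt, hRR, hc, zero_smul, sub_zero]
  · have hdx0 : d ⬝ᵥ x ≠ 0 := fun h0 => hd (by rw [← hdx, h0, mul_zero])
    have hcx : c * (d ⬝ᵥ x) = 1 := by simp only [c]; rw [← hdx]; field_simp
    rw [sub_mulVec, one_mulVec, smul_mulVec, vecMulVec_mulVec, op_smul_eq_smul, smul_smul, hcx,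
      one_smul, sub_sub_cancel]

theorem IsHermitian.exists_orthogonal_conj_fixing {A B : Matrix m m ℝ} (hA : A.IsHermitian)
    (hB : B.IsHermitian) (h : A.charpoly = B.charpoly) {v : m → ℝ} (hAv : A *ᵥ v = 0)
    (hBv : B *ᵥ v = 0) : ∃ Q ∈ orthogonalGroup m ℝ, Q * A = B * Q ∧ Q *ᵥ v = v := by
  obtain ⟨U, hU, hUAB⟩ := hA.exists_unitary_conj_eq hB h
  have hUtU : Uᵀ * U = 1 := by
    rw [← conjTranspose_eq_transpose_of_trivial]; exact (mem_unitaryGroup_iff'.mp hU)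
  have hUA : U * A = B * U := by
    rw [← hUAB, Matrix.mul_assoc _ (star U), mem_unitaryGroup_iff'.mp hU, Matrix.mul_one]
  have hUv : B *ᵥ (U *ᵥ v) = 0 := by
    rw [mulVec_mulVec, ← hUA, ← mulVec_mulVec, hAv, mulVec_zero]
  have hUvv : U *ᵥ v ⬝ᵥ U *ᵥ v = v ⬝ᵥ v := by
    rw [dotProduct_mulVec, ← mulVec_transpose, mulVec_mulVec, hUtU, one_mulVec]
  obtain ⟨R, hR, hRB, hRv⟩ := exists_orthogonal_commute_mulVec_eq hB hUv hBv hUvv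
  refine ⟨R * U, Submonoid.mul_mem _ hR ((mem_orthogonalGroup_iff' m ℝ).mpr hUtU), ?_, ?_⟩
  · rw [Matrix.mul_assoc, hUA, ← Matrix.mul_assoc, hRB, Matrix.mul_assoc]
  · rw [← mulVec_mulVec, hRv]

section Blocks

variable {α β R : Type*} [Fintype α] [Fintype β] [DecidableEq α] [DecidableEq β] [CommRing R]

theorem charpoly_fromBlocks_eq_of_orthogonal_conj {A : Matrix α α R} {u u' : α → R}
    {D₁ D₂ Q : Matrix β β R} (hQ : Qᵀ * Q = 1) (hQ1 : Q *ᵥ (fun _ => 1) = fun _ => 1)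
    (hQD : Q * D₁ = D₂ * Q) :
    (fromBlocks A (vecMulVec u fun _ => 1) (vecMulVec (fun _ => 1) u') D₁).charpoly =
      (fromBlocks A (vecMulVec u fun _ => 1) (vecMulVec (fun _ => 1) u') D₂).charpoly := by
  have h1Q : (fun _ => 1) ᵥ* Q = fun _ => (1 : R) := by
    rw [← mulVec_transpose, ← hQ1, mulVec_mulVec, hQ, one_mulVec, hQ1]
  set P : Matrix (α ⊕ β) (α ⊕ β) R := fromBlocks 1 0 0 Q
  have hPP : Pᵀ * P = 1 := by
    simp [P, fromBlocks_transpose, fromBlocks_multiply, hQ, fromBlocks_one]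
  have hconj : P * fromBlocks A (vecMulVec u fun _ => 1) (vecMulVec (fun _ => 1) u') D₁ =
      fromBlocks A (vecMulVec u fun _ => 1) (vecMulVec (fun _ => 1) u') D₂ * P := by
    simp [P, fromBlocks_multiply, mul_vecMulVec, vecMulVec_mul, hQ1, h1Q, hQD]
  rw [← Matrix.mul_one (fromBlocks A _ _ D₂), ← mul_eq_one_comm.mp hPP, ← Matrix.mul_assoc,
    ← hconj, charpoly_mul_comm, ← Matrix.mul_assoc, hPP, Matrix.one_mul]

end Blocks

end Matrix

namespace SimpleGraph

section Iso

variable {V W : Type*} [Fintype V] [Fintype W] [DecidableEq V] [DecidableEq W]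

theorem Iso.reindex_lapMatrix {R : Type*} [AddGroupWithOne R] {G : SimpleGraph V}
    {G' : SimpleGraph W} [DecidableRel G.Adj] [DecidableRel G'.Adj] (f : G ≃g G') :
    (G.lapMatrix R).reindex f f = G'.lapMatrix R := by
  ext i j
  obtain ⟨i, rfl⟩ := f.surjective i
  simp [lapMatrix, degMatrix, ← f.reindex_adjMatrix R, diagonal_apply, Equiv.eq_symm_apply]

theorem Iso.charpoly_lapMatrix_eq {R : Type*} [CommRing R] {G : SimpleGraph V}
    {G' : SimpleGraph W} [DecidableRel G.Adj] [DecidableRel G'.Adj] (f : G ≃g G') :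
    (G.lapMatrix R).charpoly = (G'.lapMatrix R).charpoly := by
  rw [← f.reindex_lapMatrix, charpoly_reindex]

end Iso

variable {α β V W : Type*}

def joinOn (K : SimpleGraph α) (S : Finset α) (H : SimpleGraph β) : SimpleGraph (α ⊕ β) where
  Adj
    | .inl a, .inl a' => K.Adj a a'
    | .inl a, .inr _ => a ∈ S
    | .inr _, .inl a => a ∈ S
    | .inr b, .inr b' => H.Adj b b'
  symm := by
    refine ⟨?_⟩
    rintro (a | b) (a' | b') h
    exacts [h.symm, h, h, h.symm]
  loopless := by
    refine ⟨?_⟩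
    rintro (a | b) h
    exacts [K.irrefl h, H.irrefl h]

section joinOn

variable (K : SimpleGraph α) (S : Finset α) (H : SimpleGraph β)

@[simp] theorem joinOn_adj_inl_inl (a a' : α) :
    (joinOn K S H).Adj (.inl a) (.inl a') ↔ K.Adj a a' :=
  Iff.rfl

@[simp] theorem joinOn_adj_inl_inr (a : α) (b : β) :
    (joinOn K S H).Adj (.inl a) (.inr b) ↔ a ∈ S :=
  Iff.rfl

@[simp] theorem joinOn_adj_inr_inl (b : β) (a : α) :
    (joinOn K S H).Adj (.inr b) (.inl a) ↔ a ∈ S :=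
  Iff.rfl

@[simp] theorem joinOn_adj_inr_inr (b b' : β) :
    (joinOn K S H).Adj (.inr b) (.inr b') ↔ H.Adj b b' :=
  Iff.rfl

variable [Fintype α] [Fintype β] [DecidableRel (joinOn K S H).Adj]

theorem degree_joinOn_inl [DecidableEq α] [DecidableRel K.Adj] (a : α) :
    (joinOn K S H).degree (.inl a) = K.degree a + if a ∈ S then Fintype.card β else 0 := by
  have h : (joinOn K S H).neighborFinset (.inl a) =
      (K.neighborFinset a).disjSum (if a ∈ S then univ else ∅) := by
    ext (a' | b) <;> by_cases ha : a ∈ S <;> simp [ha]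
  rw [← card_neighborFinset_eq_degree, h, card_disjSum, card_neighborFinset_eq_degree]
  split_ifs <;> simp

theorem degree_joinOn_inr [DecidableRel H.Adj] (b : β) :
    (joinOn K S H).degree (.inr b) = #S + H.degree b := by
  have h : (joinOn K S H).neighborFinset (.inr b) = S.disjSum (H.neighborFinset b) := by
    ext (a | b') <;> simp
  rw [← card_neighborFinset_eq_degree, h, card_disjSum, card_neighborFinset_eq_degree]

theorem lapMatrix_joinOn [DecidableEq α] [DecidableEq β] [DecidableRel K.Adj]
    [DecidableRel H.Adj] (R : Type*) [Ring R] :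
    (joinOn K S H).lapMatrix R =
      fromBlocks (K.lapMatrix R + diagonal fun a => if a ∈ S then (Fintype.card β : R) else 0)
        (vecMulVec (fun a => if a ∈ S then -1 else 0) fun _ => 1)
        (vecMulVec (fun _ => 1) fun a => if a ∈ S then -1 else 0)
        (H.lapMatrix R + (#S : R) • 1) := by
  ext (a | b) (a' | b') <;>
    simp [lapMatrix, degMatrix, degree_joinOn_inl, degree_joinOn_inr,
      diagonal_apply, one_apply, vecMulVec_apply] <;>
    split_ifs <;> abel

end joinOn

theorem charpoly_lapMatrix_joinOn_eq [Fintype α] [Fintype β] [DecidableEq α] [DecidableEq β]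
    (K : SimpleGraph α) (S : Finset α) {H₁ H₂ : SimpleGraph β} [DecidableRel K.Adj]
    [DecidableRel H₁.Adj] [DecidableRel H₂.Adj] [DecidableRel (joinOn K S H₁).Adj]
    [DecidableRel (joinOn K S H₂).Adj]
    (h : (H₁.lapMatrix ℝ).charpoly = (H₂.lapMatrix ℝ).charpoly) :
    ((joinOn K S H₁).lapMatrix ℝ).charpoly = ((joinOn K S H₂).lapMatrix ℝ).charpoly := by
  obtain ⟨Q, hQ, hQL, hQ1⟩ := (H₁.isHermitian_lapMatrix ℝ).exists_orthogonal_conj_fixing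
    (H₂.isHermitian_lapMatrix ℝ) h H₁.lapMatrix_mulVec_const_eq_zero
    H₂.lapMatrix_mulVec_const_eq_zero
  rw [lapMatrix_joinOn, lapMatrix_joinOn]
  refine charpoly_fromBlocks_eq_of_orthogonal_conj ((mem_orthogonalGroup_iff' β ℝ).mp hQ) hQ1 ?_
  rw [Matrix.mul_add, Matrix.add_mul, hQL, Matrix.mul_smul, Matrix.smul_mul, Matrix.mul_one,
    Matrix.one_mul]

def subdivision (G : SimpleGraph V) : SimpleGraph (V ⊕ G.edgeSet) where
  Adj
    | .inl v, .inr e => v ∈ (e : Sym2 V)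
    | .inr e, .inl v => v ∈ (e : Sym2 V)
    | _, _ => False
  symm := by
    refine ⟨?_⟩
    rintro (v | e) (v' | e') h <;> exact h
  loopless := by
    refine ⟨?_⟩
    rintro (v | e) h <;> exact h

def svJoinIsoJoinOn [Fintype V] (G : SimpleGraph V) (H : SimpleGraph W) :
    svJoin G H ≃g joinOn (subdivision G) (univ.disjSum ∅) H where
  toEquiv := (Equiv.sumAssoc _ _ _).symm
  map_rel_iff' := by
    rintro (v | e | w) (v' | e' | w') <;> simp [svJoin, subdivision]

end SimpleGraph

open SimpleGraph

theorem lapM_eq_lapMatrix {V : Type*} [Fintype V] [DecidableEq V] (G : SimpleGraph V)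
    [DecidableRel G.Adj] : lapM G = G.lapMatrix ℝ := by
  unfold lapM
  congr!

theorem svJoin_L_cospectral_right_general (n n₂ : ℕ) (G : SimpleGraph (Fin n))
    (H₁ H₂ : SimpleGraph (Fin n₂))
    (hcosp : (lapM H₁).charpoly = (lapM H₂).charpoly) :
    (lapM (svJoin G H₁)).charpoly = (lapM (svJoin G H₂)).charpoly := by
  rw [lapM_eq_lapMatrix, lapM_eq_lapMatrix] at hcosp ⊢
  rw [(svJoinIsoJoinOn G H₁).charpoly_lapMatrix_eq, (svJoinIsoJoinOn G H₂).charpoly_lapMatrix_eq]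
  exact charpoly_lapMatrix_joinOn_eq _ _ hcosp

/-- If `G` is regular and `H₁, H₂` are `L`-cospectral, then `G ∨̇ H₁` and `G ∨̇ H₂`
are `L`-cospectral. -/
theorem svJoin_L_cospectral_right (n n₂ r : ℕ) (G : SimpleGraph (Fin n))
    (hreg : G.IsRegularOfDegree r)
    (H₁ H₂ : SimpleGraph (Fin n₂))
    (hcosp : (lapM H₁).charpoly = (lapM H₂).charpoly) :
    (lapM (svJoin G H₁)).charpoly = (lapM (svJoin G H₂)).charpoly :=
  svJoin_L_cospectral_right_general n n₂ G H₁ H₂ hcosp
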